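/- Let |φ₁⟩,…,|φ₂₄⟩ ∈ ℂ³⊗ℂ⁹ be defined by |φ_{1,2}⟩=|1,0⟩±|2,1⟩, |φ_{3,4}⟩=|1,1⟩±|2,0⟩, |φ_{5,6}⟩=|1,2⟩±|2,3⟩, |φ_{7,8}⟩=|1,3⟩±|2,2⟩, |φ_{9,10}⟩=|2,5⟩±|2,7⟩, |φ_{11,12}⟩=|2,4⟩±|2,6⟩, |φ_{13,14}⟩=|0,5⟩±|1,6⟩, |φ_{15,16}⟩=|0,6⟩±|1,5⟩, |φ_{17,18}⟩=|0,7⟩±|1,8⟩, |φ_{19,20}⟩=|0,8⟩±|1,7⟩, |φ_{21,22}⟩=|0,1⟩±|0,3⟩, |φ_{23,24}⟩=|0,2⟩±|0,4⟩. If E is any 3×3 complex Hermitian matrix satisfying ⟨φ_k|(E⊗I₉)|φ_l⟩ = 0 for all k ≠ l, then E is a scalar multiple of the 3×3 identity. -/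

import Mathlib

open Finset

/-- standard basis vector `e_i ⊗ e_j` of `ℂ³ ⊗ ℂ⁹`. -/
def ket39 (i : Fin 3) (j : Fin 9) : Fin 3 × Fin 9 → ℂ := fun p => if p = (i, j) then 1 else 0

/-- the twelve pairs `(u, v)` of basis vectors of the `3 × 9` grid construction. -/
def gridPair : Fin 12 → (Fin 3 × Fin 9) × (Fin 3 × Fin 9)
  | 0 => ((1,0),(2,1))
  | 1 => ((1,1),(2,0))
  | 2 => ((1,2),(2,3))
  | 3 => ((1,3),(2,2))
  | 4 => ((2,5),(2,7))
  | 5 => ((2,4),(2,6))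
  | 6 => ((0,5),(1,6))
  | 7 => ((0,6),(1,5))
  | 8 => ((0,7),(1,8))
  | 9 => ((0,8),(1,7))
  | 10 => ((0,1),(0,3))
  | 11 => ((0,2),(0,4))

/-- the 24 states `|φ_k⟩`: for the pair `m` the two states `|u⟩ ± |v⟩`. -/
def gridState (m : Fin 12) (ε : Fin 2) : Fin 3 × Fin 9 → ℂ :=
  ket39 (gridPair m).1.1 (gridPair m).1.2
    + (if ε = 0 then (1 : ℂ) else -1) • ket39 (gridPair m).2.1 (gridPair m).2.2

/-- `(E ⊗ I₉) v` for `E` acting on the first tensor factor. -/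
noncomputable def actA (E : Matrix (Fin 3) (Fin 3) ℂ) (v : Fin 3 × Fin 9 → ℂ) :
    Fin 3 × Fin 9 → ℂ := fun p => ∑ i : Fin 3, E p.1 i * v (i, p.2)

/-!
Since `⟨(a, j)| E ⊗ I₉ |(b, k)⟩ = E a b · δ j k`, the orthogonality of two of the states `|u⟩ ± |v⟩`
is a linear relation among at most four entries of `E`. The two pairs `(1,0),(2,1)` and
`(1,1),(2,0)` share their columns crosswise, so their orthogonality relations kill `E 1 2` and `E 2 1`;
likewise the pairs in columns 5 and 6 kill `E 0 1` and `E 1 0`, and the states `|2,5⟩ + |2,7⟩` and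
`|0,5⟩ + |1,6⟩`, which meet only in column 5, kill `E 0 2` and `E 2 0`. Finally `⟨u + v| E ⊗ I₉ |u - v⟩ = 0` with `u, v` in
different rows and columns equates two diagonal entries, so `E` is scalar.
-/

open Matrix
open scoped Kronecker

theorem Matrix.dotProduct_mulVec_single_add_smul_single {R n : Type*} [CommSemiring R]
    [StarRing R] [Fintype n] [DecidableEq n] (M : Matrix n n R) (u v u' v' : n) (s s' : R) :
    star (Pi.single u 1 + s • Pi.single v 1) ⬝ᵥ M *ᵥ (Pi.single u' 1 + s' • Pi.single v' 1) =
      M u u' + s' * M u v' + star s * M v u' + star s * s' * M v v' := by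
  simp only [star_add, star_smul, Pi.star_single, star_one, mulVec_add, mulVec_smul,
    mulVec_single_one, add_dotProduct, dotProduct_add, smul_dotProduct, dotProduct_smul,
    single_one_dotProduct, col_apply, smul_eq_mul]
  ring

theorem Matrix.IsDiag.eq_smul_one {α n : Type*} [Semiring α] [DecidableEq n] {A : Matrix n n α}
    (hA : A.IsDiag) {c : α} (hc : ∀ i, A i i = c) : A = c • 1 := by
  rw [smul_one_eq_diagonal, ← hA.diagonal_diag]
  exact congrArg diagonal (funext hc)

theorem ket39_eq_single (i : Fin 3) (j : Fin 9) : ket39 i j = Pi.single (i, j) 1 := by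
  ext p
  simp [ket39, Pi.single_apply]

theorem actA_eq_kronecker_mulVec (E : Matrix (Fin 3) (Fin 3) ℂ) (v : Fin 3 × Fin 9 → ℂ) :
    actA E v = (E ⊗ₖ (1 : Matrix (Fin 9) (Fin 9) ℂ)) *ᵥ v := by
  ext ⟨a, j⟩
  simp [actA, mulVec, dotProduct, Fintype.sum_prod_type, one_apply]

theorem sum_conj_mul_actA (E : Matrix (Fin 3) (Fin 3) ℂ) (ψ φ : Fin 3 × Fin 9 → ℂ) :
    ∑ p, starRingEnd ℂ (ψ p) * actA E φ p =
      star ψ ⬝ᵥ (E ⊗ₖ (1 : Matrix (Fin 9) (Fin 9) ℂ)) *ᵥ φ := by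
  rw [actA_eq_kronecker_mulVec]
  rfl

theorem grid_first_party_povm_trivial_general (E : Matrix (Fin 3) (Fin 3) ℂ)
    (h : ∀ m ε m' ε', (m, ε) ≠ (m', ε') →
      ∑ p : Fin 3 × Fin 9,
        (starRingEnd ℂ) (gridState m ε p) * actA E (gridState m' ε') p = 0) :
    ∃ c : ℂ, E = c • (1 : Matrix (Fin 3) (Fin 3) ℂ) := by
  simp only [sum_conj_mul_actA, gridState, ket39_eq_single,
    dotProduct_mulVec_single_add_smul_single] at h
  have sum₁₂ := h 0 0 1 0 (by decide)
  have diff₁₂ := h 0 0 1 1 (by decide)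
  have sum₀₁ := h 6 0 7 0 (by decide)
  have diff₀₁ := h 6 0 7 1 (by decide)
  have h₂₀ := h 4 0 6 0 (by decide)
  have h₀₂ := h 6 0 4 0 (by decide)
  have diag₁₂ := h 0 0 0 1 (by decide)
  have diag₀₁ := h 6 0 6 1 (by decide)
  simp only [gridPair, Fin.isValue, kroneckerMap_apply, one_apply, zero_ne_one, ↓reduceIte,
    mul_zero, mul_one, one_mul, zero_add, star_one, one_ne_zero, add_zero, neg_mul, mul_neg,
    Fin.reduceEq] at sum₁₂ diff₁₂ sum₀₁ diff₀₁ h₂₀ h₀₂ diag₁₂ diag₀₁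
  refine ⟨E 1 1, IsDiag.eq_smul_one ?_ ?_⟩
  · intro i j hij
    fin_cases i <;> fin_cases j <;> simp at hij ⊢ <;> grind
  · intro i
    fin_cases i <;> simp <;> grind

theorem grid_first_party_povm_trivial (E : Matrix (Fin 3) (Fin 3) ℂ)
    (hE : E.IsHermitian)
    (h : ∀ m ε m' ε', (m, ε) ≠ (m', ε') →
      ∑ p : Fin 3 × Fin 9,
        (starRingEnd ℂ) (gridState m ε p) * actA E (gridState m' ε') p = 0) :
    ∃ c : ℂ, E = c • (1 : Matrix (Fin 3) (Fin 3) ℂ) :=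
  grid_first_party_povm_trivial_general E h
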